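/- Let w ∈ ℕ, let (G,φ) be a J_w-free ordered graph, let c be a proper 3-coloring of G, let e = uv be an edge of G with φ(u) < φ(v), and let i ∈ {1,2,3}. Let U be the set of all vertices in lft(e) having at least one neighbor in c^{-1}(i) ∩ und(e), and let S ⊆ c^{-1}(i) ∩ und(e) be an inclusion-minimal set with the property that every vertex in U has a neighbor in S. Then |S| ≤ 27w² + 2. -/

import Mathlib

/-!
By minimality every `s ∈ S` has a private neighbour `f s ∈ U`, a vertex left of `u` whose only
neighbour in `S` is `s`. As `S` is monochromatic, `s ↦ f s` is an induced matching from the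
independent set `S` into the region left of all of `S`. Splitting `S` according to the colour of
`f s` makes the left ends independent too, and such a matching of size `3w + 1` contains `J_w`:
among the `2w + 1` pairs with the lowest right ends, take the pair whose left end is the middle
one, and add `w` right ends of the remaining pairs. Hence `|S| ≤ 3 · 3w ≤ 27w² + 2`.
-/

/-- An ordered graph `(G, φ)` is `J_w`-free: there are no `3w + 2` vertices
`x 0, …, x (3w+1)` increasing with respect to `φ` whose only edge is between the
`(w+1)`-st and the `(2w+2)`-nd of them (zero-indexed: indices `w` and `2w+1`). -/
def JwFree {V : Type*} (G : SimpleGraph V) (φ : V → ℝ) (w : ℕ) : Prop :=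
  ¬ ∃ x : Fin (3 * w + 2) → V,
      (∀ i j : Fin (3 * w + 2), i < j → φ (x i) < φ (x j)) ∧
      ∀ i j : Fin (3 * w + 2), G.Adj (x i) (x j) ↔
        (((i : ℕ) = w ∧ (j : ℕ) = 2 * w + 1) ∨ ((j : ℕ) = w ∧ (i : ℕ) = 2 * w + 1))

open Finset

theorem Finset.exists_subset_card_eq_forall_lt {α : Type*} [LinearOrder α] {T : Finset α}
    {n : ℕ} (hn : n ≤ T.card) : ∃ B ⊆ T, B.card = n ∧ ∀ x ∈ B, ∀ y ∈ T \ B, x < y := by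
  induction T using Finset.induction_on_max generalizing n with
  | empty => exact ⟨∅, subset_rfl, by simp at hn ⊢; omega, by simp⟩
  | insert a s has ih =>
    have ha : a ∉ s := fun h => lt_irrefl a (has a h)
    rw [card_insert_of_notMem ha] at hn
    rcases hn.eq_or_lt with rfl | hlt
    · exact ⟨insert a s, subset_rfl, card_insert_of_notMem ha, by simp⟩
    · obtain ⟨B, hBs, hB, hlow⟩ := ih (Nat.lt_succ_iff.mp hlt)
      refine ⟨B, hBs.trans (subset_insert a s), hB, fun x hx y hy => ?_⟩
      obtain ⟨hy, hyB⟩ := mem_sdiff.mp hy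
      rcases mem_insert.mp hy with rfl | hys
      · exact has x (hBs hx)
      · exact hlow x hx y (mem_sdiff.mpr ⟨hys, hyB⟩)

namespace SimpleGraph

variable {V : Type*} {G : SimpleGraph V}

theorem exists_private_neighbor {U S : Set V} (hcov : ∀ x ∈ U, ∃ y ∈ S, G.Adj x y)
    (hmin : ∀ S' ⊆ S, (∀ x ∈ U, ∃ y ∈ S', G.Adj x y) → S' = S) {s : V} (hs : s ∈ S) :
    ∃ x ∈ U, G.Adj x s ∧ ∀ t ∈ S, G.Adj x t → t = s := by
  by_contra! hpriv
  have hcov' : ∀ x ∈ U, ∃ y ∈ S \ {s}, G.Adj x y := by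
    intro x hx
    obtain ⟨y, hy, hxy⟩ := hcov x hx
    by_cases hys : y = s
    · subst hys
      obtain ⟨t, ht, hxt, hts⟩ := hpriv x hx hxy
      exact ⟨t, ⟨ht, hts⟩, hxt⟩
    · exact ⟨y, ⟨hy, hys⟩, hxy⟩
  have hs' : s ∈ S \ {s} := (hmin _ Set.sdiff_subset hcov').symm ▸ hs
  exact hs'.2 rfl

theorem IsIndepSet.not_adj {s : Set V} (hs : G.IsIndepSet s) {x y : V} (hx : x ∈ s)
    (hy : y ∈ s) : ¬G.Adj x y :=
  fun h => hs hx hy h.ne h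

end SimpleGraph

section JwFree

variable {V : Type*} {G : SimpleGraph V} {φ : V → ℝ} {w : ℕ}

theorem not_jwFree_of_blocks {a : Fin (2 * w + 1) → V} {r : Fin (w + 1) → V}
    (ha : StrictMono (φ ∘ a)) (hr : StrictMono (φ ∘ r)) (har : ∀ k l, φ (a k) < φ (r l))
    (ha_indep : G.IsIndepSet (Set.range a)) (hr_indep : G.IsIndepSet (Set.range r))
    (hadj : ∀ k l, G.Adj (a k) (r l) ↔ (k : ℕ) = w ∧ (l : ℕ) = 0) : ¬JwFree G φ w := by
  refine not_not_intro ⟨fun k => if h : (k : ℕ) < 2 * w + 1 then a ⟨k, h⟩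
    else r ⟨k - (2 * w + 1), by omega⟩, fun k l hkl => ?_, fun k l => ?_⟩
  · have hkl' : (k : ℕ) < l := hkl
    dsimp only
    split_ifs with hk hl hl
    · exact ha (Fin.mk_lt_mk.mpr hkl')
    · exact har _ _
    · omega
    · exact hr (Fin.mk_lt_mk.mpr (by omega))
  · have := k.isLt
    have := l.isLt
    dsimp only
    split_ifs with hk hl hl
    · exact iff_of_false (ha_indep.not_adj ⟨_, rfl⟩ ⟨_, rfl⟩) (by omega)
    · exact (hadj _ _).trans (by simp only; omega)
    · exact G.adj_comm _ _ |>.trans ((hadj _ _).trans (by simp only; omega))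
    · exact iff_of_false (hr_indep.not_adj ⟨_, rfl⟩ ⟨_, rfl⟩) (by omega)

theorem JwFree.card_le_of_matching (hφ : Function.Injective φ)
    (hfree : JwFree G φ w) {T : Finset V} {f : V → V} (hT : G.IsIndepSet T)
    (hfT : G.IsIndepSet (f '' T)) (hmatch : ∀ s ∈ T, ∀ t ∈ T, G.Adj (f s) t ↔ s = t)
    (hlt : ∀ s ∈ T, ∀ t ∈ T, φ (f s) < φ t) : T.card ≤ 3 * w := by
  classical
  by_contra! hcard
  let : LinearOrder V := LinearOrder.lift' φ hφ
  have hf : Set.InjOn f T := fun s hs t ht hst =>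
    ((hmatch t ht s hs).mp (hst ▸ (hmatch s hs s hs).mpr rfl)).symm
  obtain ⟨B, hBT, hBcard, hBlt⟩ :=
    exists_subset_card_eq_forall_lt (T := T) (n := 2 * w + 1) (by omega)
  obtain ⟨D, hD, hDcard⟩ := exists_subset_card_eq (s := T \ B) (n := w)
    (by rw [card_sdiff_of_subset hBT]; omega)
  have hLcard : (B.image f).card = 2 * w + 1 := by
    rw [card_image_of_injOn (hf.mono hBT), hBcard]
  set a := (B.image f).orderEmbOfFin hLcard
  -- `f b` is the middle one of the left ends of the `2w + 1` lowest pairs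
  obtain ⟨b, hbB, hfb⟩ := mem_image.mp ((B.image f).orderEmbOfFin_mem hLcard ⟨w, by omega⟩)
  have hbD : b ∉ D := fun h => (mem_sdiff.mp (hD h)).2 hbB
  have hRcard : (insert b D).card = w + 1 := by rw [card_insert_of_notMem hbD, hDcard]
  have hRT : insert b D ⊆ T := insert_subset (hBT hbB) (hD.trans sdiff_subset)
  set r := (insert b D).orderEmbOfFin hRcard
  have hr0 : r ⟨0, by omega⟩ = b := by
    rw [orderEmbOfFin_zero, min'_eq_iff]
    refine ⟨mem_insert_self b D, fun y hy => ?_⟩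
    rcases mem_insert.mp hy with rfl | hyD
    · exact le_rfl
    · exact (hBlt b hbB y (hD hyD)).le
  have ha_mem (k) : ∃ s ∈ B, f s = a k := mem_image.mp (orderEmbOfFin_mem _ hLcard k)
  have hr_mem (l) : r l ∈ insert b D := orderEmbOfFin_mem _ hRcard l
  refine not_jwFree_of_blocks (a := a) (r := r) (fun k l h => a.strictMono h)
    (fun k l h => r.strictMono h) (fun k l => ?_) ?_ ?_ (fun k l => ?_) hfree
  · obtain ⟨s, hs, hsk⟩ := ha_mem k
    exact hsk ▸ hlt s (hBT hs) _ (hRT (hr_mem l))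
  · rw [range_orderEmbOfFin, coe_image]
    exact hfT.mono (Set.image_mono hBT)
  · rw [range_orderEmbOfFin]
    exact hT.mono hRT
  · obtain ⟨s, hs, hsk⟩ := ha_mem k
    have hsb : s = b ↔ (k : ℕ) = w := by
      rw [← hf.eq_iff (hBT hs) (hBT hbB), hsk, hfb, a.injective.eq_iff, Fin.ext_iff]
    have hrb : r l = b ↔ (l : ℕ) = 0 := by
      rw [← hr0, r.injective.eq_iff, Fin.ext_iff]
    rw [← hsk, hmatch s (hBT hs) _ (hRT (hr_mem l)), ← hsb, ← hrb]
    refine ⟨fun hsr => ?_, fun h => h.1.trans h.2.symm⟩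
    rcases mem_insert.mp (hr_mem l) with hrl | hrl
    · exact ⟨hsr.trans hrl, hrl⟩
    · exact absurd (hsr ▸ hs) (mem_sdiff.mp (hD hrl)).2

theorem JwFree.ncard_le_of_matching_of_coloring (hφ : Function.Injective φ)
    (hfree : JwFree G φ w) {α : Type*} [Fintype α] (C : G.Coloring α) {S : Set V}
    {f : V → V} (hS : G.IsIndepSet S) (hmatch : ∀ s ∈ S, ∀ t ∈ S, G.Adj (f s) t ↔ s = t)
    (hlt : ∀ s ∈ S, ∀ t ∈ S, φ (f s) < φ t) : S.ncard ≤ 3 * w * Fintype.card α := by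
  classical
  rcases S.finite_or_infinite with hSfin | hSinf
  · rw [Set.ncard_eq_toFinset_card S hSfin, ← card_univ]
    refine card_le_mul_card_image_of_maps_to (f := C ∘ f) (fun _ _ => mem_univ _) _
      fun j _ => ?_
    have hfiber : ↑({s ∈ hSfin.toFinset | C (f s) = j} : Finset V) ⊆ S := by
      intro s hs
      exact (hSfin.mem_toFinset.mp (mem_filter.mp hs).1)
    refine hfree.card_le_of_matching hφ (hS.mono hfiber) ?_
      (fun s hs t ht => hmatch s (hfiber hs) t (hfiber ht))
      (fun s hs t ht => hlt s (hfiber hs) t (hfiber ht))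
    refine (C.isIndepSet_colorClass j).mono ?_
    rintro _ ⟨s, hs, rfl⟩
    exact (mem_filter.mp hs).2
  · rw [hSinf.ncard]
    exact Nat.zero_le _

end JwFree

theorem minimal_dominating_set_small
    {V : Type*} (w : ℕ) (G : SimpleGraph V) (φ : V → ℝ)
    (hφ : Function.Injective φ) (hfree : JwFree G φ w)
    (c : V → Fin 3) (hc : ∀ x y, G.Adj x y → c x ≠ c y)
    (u v : V) (i : Fin 3)
    (U S : Set V)
    (hU : U = {x : V | φ x < φ u ∧ ∃ y, G.Adj x y ∧ c y = i ∧ φ u ≤ φ y ∧ φ y ≤ φ v})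
    (hS : S ⊆ {y : V | c y = i ∧ φ u ≤ φ y ∧ φ y ≤ φ v})
    (hcov : ∀ x ∈ U, ∃ y ∈ S, G.Adj x y)
    (hmin : ∀ S' : Set V, S' ⊆ S → (∀ x ∈ U, ∃ y ∈ S', G.Adj x y) → S' = S) :
    S.ncard ≤ 27 * w ^ 2 + 2 := by
  subst hU
  let C : G.Coloring (Fin 3) := SimpleGraph.Coloring.mk c (hc _ _)
  choose! f hfU hfadj hfpriv using fun s (hs : s ∈ S) => G.exists_private_neighbor hcov hmin hs
  have hSC : S ⊆ C.colorClass i := fun y hy => (hS hy).1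
  have hS9 : S.ncard ≤ 3 * w * 3 := by
    simpa using hfree.ncard_le_of_matching_of_coloring hφ C
      ((C.isIndepSet_colorClass i).mono hSC)
      (fun s hs t ht => ⟨fun h => (hfpriv s hs t ht h).symm, by rintro rfl; exact hfadj s hs⟩)
      (fun s hs t ht => (hfU s hs).1.trans_le (hS ht).2.1)
  nlinarith [Nat.le_self_pow two_ne_zero w]
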